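/- arXiv:1711.06132 — 3 statements merged into one kernel-verified Lean document; each statement's English description precedes it below -/
import Mathlib

section
/- Let ℓ be a prime, r ≥ 1, and Π a closed subgroup of GL_r(ℤ_ℓ). There exists an integer N ≥ 1, depending only on Π, such that for every n ≥ N the set 𝒞_n(Π) coincides with the set of open subgroups U ⊆ Π such that Π(n) ⊆ U but Π(n-1) ⊄ U. -/
/-!
Writing elements of `Π(k)` as `1 + ℓ^k A`, one has `(1 + ℓ^k A)^ℓ ≡ 1 + ℓ^(k+1) A` modulo
`ℓ^(2k)` and `⁅Π(k), Π(k)⁆ ⊆ Π(2k)`. So for `k ≥ 1` the quotient `Π(k)/Π(k+1)` is an elementary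
abelian `ℓ`-group, in which the maximal subgroups intersect trivially: `Φ(Π(k)) ⊆ Π(k+1)`.

Conversely, a maximal open subgroup `M` of `Π(k)` contains some `Π(m)`, hence is a maximal subgroup
of the finite `ℓ`-group `Π(k)/Π(m)`; it has index `ℓ`, is normal and contains all `ℓ`-th powers.
The residues `A mod ℓ` of the elements `1 + ℓ^k A` of `Π` form subsets of `M_r(𝔽_ℓ)` that grow
with `k ≥ 2` (take `ℓ`-th powers), so they stabilise from some `N` on. Beyond `N` every element of
`Π(k+1)` is an `ℓ`-th power of an element of `Π(k)` modulo `Π(k+2)`, and descending from `Π(m)`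
gives `Π(k+1) ⊆ M`.
-/
open Matrix

/-- Reduction modulo `ℓ ^ n` on `GL_r(ℤ_ℓ)`. -/
noncomputable def glRed (l : ℕ) [Fact (Nat.Prime l)] (r n : ℕ) :
    GL (Fin r) ℤ_[l] →* GL (Fin r) (ZMod (l ^ n)) :=
  Matrix.GeneralLinearGroup.map (PadicInt.toZModPow n)

/-- `Π(n)`: the kernel of reduction modulo `ℓ ^ n` restricted to the closed subgroup `Π`,
viewed as a subgroup of `Π`. -/
noncomputable def levelSubgroup (l : ℕ) [Fact (Nat.Prime l)] (r : ℕ)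
    (P : Subgroup (GL (Fin r) ℤ_[l])) (n : ℕ) : Subgroup ↥P :=
  ((glRed l r n).comp P.subtype).ker

/-- A maximal proper open subgroup of a topological group. -/
def IsMaximalOpenSubgroup {G : Type*} [Group G] [TopologicalSpace G] (U : Subgroup G) : Prop :=
  IsOpen (U : Set G) ∧ U ≠ ⊤ ∧ ∀ V : Subgroup G, IsOpen (V : Set G) → U < V → V = ⊤

/-- The Frattini subgroup of a topological group: the intersection of all maximal proper
open subgroups. -/
def frattiniOpen (G : Type*) [Group G] [TopologicalSpace G] : Subgroup G :=
  sInf {U : Subgroup G | IsMaximalOpenSubgroup U}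

/-- The Frattini subgroup of a subgroup `K`, viewed as a subgroup of the ambient group. -/
def frattiniOf {G : Type*} [Group G] [TopologicalSpace G] (K : Subgroup G) : Subgroup G :=
  (frattiniOpen ↥K).map K.subtype

/-- `𝒞_n(Π)`: the set of open subgroups `U ⊆ Π` with `Φ(Π(n-1)) ⊆ U` but `Π(n-1) ⊄ U`. -/
noncomputable def Cn (l : ℕ) [Fact (Nat.Prime l)] (r : ℕ)
    (P : Subgroup (GL (Fin r) ℤ_[l])) (n : ℕ) : Set (Subgroup ↥P) :=
  {U | IsOpen (U : Set ↥P) ∧ frattiniOf (levelSubgroup l r P (n - 1)) ≤ U ∧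
    ¬ levelSubgroup l r P (n - 1) ≤ U}

open scoped commutatorElement
open Topology

section GroupTheory

variable {G : Type*} [Group G] {p : ℕ} [hp : Fact p.Prime]

open Subgroup

theorem mem_sup_zpowers_of_mem_sup_zpowers {W : Subgroup G} [W.Normal] {g ξ : G}
    (hg : g ^ p ∈ W) (hξ : ξ ∉ W) (h : ξ ∈ W ⊔ zpowers g) : g ∈ W ⊔ zpowers ξ := by
  set π := QuotientGroup.mk' W
  have hmem : ∀ {a b : G}, a ∈ W ⊔ zpowers b ↔ π a ∈ zpowers (π b) := fun {a b} => by
    rw [← MonoidHom.map_zpowers, ← mem_comap, comap_map_eq, QuotientGroup.ker_mk', sup_comm]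
  have hξ1 : π ξ ≠ 1 := fun h1 => hξ ((QuotientGroup.eq_one_iff ξ).1 h1)
  rw [hmem] at h ⊢
  have hord : orderOf (π g) = p := by
    refine orderOf_eq_prime ((QuotientGroup.eq_one_iff _).2 (by simpa using hg)) fun h1 => hξ1 ?_
    simpa [h1] using h
  obtain ⟨k, hk⟩ : ∃ k : ℕ, π g ^ k = π ξ :=
    (orderOf_pos_iff.1 (hord ▸ hp.out.pos)).mem_powers_iff_mem_zpowers.2 h
  rw [← hk, mem_zpowers_pow_iff, hord, ← Nat.Coprime, Nat.coprime_comm,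
    hp.out.coprime_iff_not_dvd]
  rintro ⟨j, rfl⟩
  exact hξ1 (by rw [← hk, pow_mul, ← hord, pow_orderOf_eq_one, one_pow])

theorem exists_isCoatom_le_notMem {K : Subgroup G} [K.FiniteIndex] (hpow : ∀ g : G, g ^ p ∈ K)
    (hcomm : commutator G ≤ K) {ξ : G} (hξ : ξ ∉ K) :
    ∃ M : Subgroup G, IsCoatom M ∧ K ≤ M ∧ ξ ∉ M := by
  have : K.Normal := .of_commutator_le _ hcomm
  have hfin : {W : Subgroup G | K ≤ W}.Finite := by
    have : Finite (G ⧸ K) := finite_quotient_of_finiteIndex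
    refine (Set.finite_range (comap (QuotientGroup.mk' K))).subset
      fun W hW => ⟨W.map (QuotientGroup.mk' K), ?_⟩
    rw [comap_map_eq, QuotientGroup.ker_mk', sup_eq_left.2 hW]
  obtain ⟨W, ⟨hKW, hξW⟩, hWmax⟩ :=
    (hfin.subset fun W hW => hW.1 : {W : Subgroup G | K ≤ W ∧ ξ ∉ W}.Finite).exists_maximal
      ⟨K, le_rfl, hξ⟩
  have : W.Normal := .of_commutator_le _ (hcomm.trans hKW)
  have hgen : ∀ g, g ∉ W → ξ ∈ W ⊔ zpowers g := fun g hg => by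
    by_contra h
    exact hg (hWmax ⟨hKW.trans le_sup_left, h⟩ le_sup_left (mem_sup_right (mem_zpowers g)))
  refine ⟨W, ⟨fun h => hξW (h ▸ mem_top ξ), fun V hWV => ?_⟩, hKW, hξW⟩
  obtain ⟨v, hvV, hvW⟩ := SetLike.exists_of_lt hWV
  have hξV : ξ ∈ V := sup_le hWV.le (zpowers_le.2 hvV) (hgen v hvW)
  refine eq_top_iff.2 fun g _ => ?_
  by_cases hg : g ∈ W
  · exact hWV.le hg
  · exact sup_le hWV.le (zpowers_le.2 hξV)
      (mem_sup_zpowers_of_mem_sup_zpowers (hKW (hpow g)) hξW (hgen g hg))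

theorem IsPGroup.index_eq_of_isCoatom [Finite G] (hG : IsPGroup p G) {M : Subgroup G}
    (hM : IsCoatom M) : M.index = p := by
  obtain ⟨n, hn⟩ := IsPGroup.iff_card.1 (hG.to_subgroup M)
  obtain ⟨k, hk⟩ := hG.index M
  have hk0 : k ≠ 0 := by
    rintro rfl
    exact hM.1 (index_eq_one.1 (by simpa using hk))
  have hcard := M.card_mul_index
  obtain ⟨L, hL, hML⟩ := Sylow.exists_subgroup_card_pow_succ (H := M) (n := n)
    ⟨p ^ (k - 1), by rw [← hcard, hn, hk, ← pow_add, ← pow_add]; congr 1; omega⟩ hn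
  have hLtop : L = ⊤ := hM.2 L (lt_of_le_of_ne hML fun h => by
    rw [h, hL] at hn; exact absurd (Nat.pow_right_injective hp.out.two_le hn) n.succ_ne_self)
  rw [hLtop, card_top, ← hcard, hn, pow_succ] at hL
  exact Nat.eq_of_mul_eq_mul_left (pow_pos hp.out.pos n) hL

theorem pow_mem_of_isCoatom {K M : Subgroup G} [K.Normal] [Finite (G ⧸ K)]
    (hK : IsPGroup p (G ⧸ K)) (hKM : K ≤ M) (hM : IsCoatom M) (g : G) : g ^ p ∈ M := by
  set π := QuotientGroup.mk' K
  have hπ : Function.Surjective π := QuotientGroup.mk'_surjective K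
  have hcomap : (M.map π).comap π = M := by
    rw [comap_map_eq, QuotientGroup.ker_mk', sup_eq_left.2 hKM]
  have hM' : IsCoatom (M.map π) := by
    refine ⟨fun h => hM.1 (by rw [← hcomap, h, comap_top]), fun S hS => ?_⟩
    have hS' : M < S.comap π := hcomap ▸ (comap_lt_comap_of_surjective hπ).2 hS
    rw [← map_comap_eq_self_of_surjective hπ S, hM.2 _ hS', map_top_of_surjective π hπ]
  have : Group.IsNilpotent (G ⧸ K) := hK.isNilpotent
  have : (M.map π).Normal :=
    NormalizerCondition.normal_of_coatom _ Group.normalizerCondition_of_isNilpotent hM'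
  rw [← hcomap, mem_comap, map_pow, ← hK.index_eq_of_isCoatom hM']
  exact pow_index_mem _ _

end GroupTheory

section TopologicalGroup

variable {G : Type*} [Group G] [TopologicalSpace G] [SeparatelyContinuousMul G]

theorem isMaximalOpenSubgroup_iff {U : Subgroup G} (hU : IsOpen (U : Set G)) :
    IsMaximalOpenSubgroup U ↔ IsCoatom U :=
  ⟨fun ⟨_, hne, hmax⟩ => ⟨hne, fun V hV => hmax V (Subgroup.isOpen_mono hV.le hU) hV⟩,
    fun h => ⟨hU, h.1, fun V _ hV => h.2 V hV⟩⟩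

theorem frattiniOpen_le_of_pow_mem {p : ℕ} [Fact p.Prime] {K : Subgroup G} [K.FiniteIndex]
    (hK : IsOpen (K : Set G)) (hpow : ∀ g : G, g ^ p ∈ K) (hcomm : commutator G ≤ K) :
    frattiniOpen G ≤ K := by
  intro ξ hξ
  by_contra hξK
  obtain ⟨M, hM, hKM, hξM⟩ := exists_isCoatom_le_notMem hpow hcomm hξK
  exact hξM (Subgroup.mem_sInf.1 hξ M
    ((isMaximalOpenSubgroup_iff (Subgroup.isOpen_mono hKM hK)).2 hM))

end TopologicalGroup

namespace Matrix

variable {n R : Type*} [Fintype n] [DecidableEq n] [CommRing R]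

theorem exists_one_add_smul_pow_eq (a : R) (A : Matrix n n R) (k : ℕ) :
    ∃ B : Matrix n n R, (1 + a • A) ^ k = 1 + ((k : R) * a) • A + a ^ 2 • B := by
  induction k with
  | zero => exact ⟨0, by simp⟩
  | succ k ih =>
    obtain ⟨B, hB⟩ := ih
    refine ⟨(k : R) • (A * A) + B + a • (B * A), ?_⟩
    rw [pow_succ, hB]
    simp only [add_mul, mul_add, smul_mul_smul, smul_add, smul_smul, mul_one, one_mul,
      Nat.cast_succ]
    module

theorem GeneralLinearGroup.exists_val_commutator_eq {a : R} {x y : GL n R} {A B : Matrix n n R}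
    (hx : (x : Matrix n n R) = 1 + a • A) (hy : (y : Matrix n n R) = 1 + a • B) :
    ∃ C : Matrix n n R, ((⁅x, y⁆ : GL n R) : Matrix n n R) = 1 + a ^ 2 • C := by
  refine ⟨(A * B - B * A) * (↑x⁻¹ : Matrix n n R) * (↑y⁻¹ : Matrix n n R), ?_⟩
  have hxy : (x : Matrix n n R) * y - y * x = a ^ 2 • (A * B - B * A) := by
    rw [hx, hy]
    simp only [add_mul, mul_add, smul_mul_smul, mul_one, one_mul, smul_sub]
    module
  have key : ((⁅x, y⁆ : GL n R) : Matrix n n R) - 1 =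
      ((x : Matrix n n R) * y - y * x) * (↑x⁻¹ : Matrix n n R) * (↑y⁻¹ : Matrix n n R) := by
    simp only [commutatorElement_def, Units.val_mul, sub_mul, mul_assoc]
    simp
  rw [← sub_eq_iff_eq_add', key, hxy, smul_mul_assoc, smul_mul_assoc]

theorem GeneralLinearGroup.val_inv_mul_eq_one_add_smul {a c : R} {x z : GL n R}
    {A B C : Matrix n n R}
    (hx : (x : Matrix n n R) = 1 + a • A) (hz : (z : Matrix n n R) = 1 + a • B)
    (hAB : A = B + c • C) :
    ((z⁻¹ * x : GL n R) : Matrix n n R) = 1 + (a * c) • ((↑z⁻¹ : Matrix n n R) * C) := by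
  have : (x : Matrix n n R) = z + (a * c) • C := by rw [hx, hz, hAB]; module
  rw [Units.val_mul, this, mul_add, mul_smul_comm]
  simp

theorem map_eq_map_iff_exists_eq_add_smul {m m' S : Type*} [CommRing S] {f : R →+* S} {a : R}
    (hf : RingHom.ker f = Ideal.span {a}) {X Y : Matrix m m' R} :
    X.map f = Y.map f ↔ ∃ A : Matrix m m' R, X = Y + a • A := by
  have hdvd : ∀ i j, f (X i j) = f (Y i j) ↔ a ∣ (X - Y) i j := fun i j => by
    rw [← Ideal.mem_span_singleton, ← hf, RingHom.mem_ker, sub_apply, map_sub, sub_eq_zero]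
  constructor
  · intro h
    choose A hA using fun i j => (hdvd i j).1 (congrFun (congrFun h i) j)
    exact ⟨Matrix.of A, by ext i j; simpa [sub_eq_iff_eq_add'] using hA i j⟩
  · rintro ⟨A, rfl⟩
    ext i j
    exact (hdvd i j).2 (by simp)

end Matrix

namespace PadicInt

variable {p : ℕ} [Fact p.Prime] {r : ℕ}

theorem nhds_one_matrix_hasBasis :
    (𝓝 (1 : Matrix (Fin r) (Fin r) ℤ_[p])).HasBasis (fun _ => True)
      fun m => {X | X.map (toZModPow m) = 1} := by
  have hp : (1 : ℝ) < p := by exact_mod_cast (Fact.out : p.Prime).one_lt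
  refine (Metric.nhds_basis_closedBall_pow
    (x := Matrix.of.symm (1 : Matrix (Fin r) (Fin r) ℤ_[p])) (inv_pos.2 (zero_lt_one.trans hp))
    (inv_lt_one_of_one_lt₀ hp)).congr (fun _ => Iff.rfl) fun m _ => ?_
  ext X
  change _ ↔ Matrix.map X (toZModPow m) = 1
  rw [Metric.mem_closedBall, dist_pi_le_iff (by positivity),
    ← Matrix.map_one (toZModPow m) (map_zero _) (map_one _), ← Matrix.ext_iff]
  refine forall_congr' fun i => (dist_pi_le_iff (by positivity)).trans (forall_congr' fun j => ?_)
  rw [dist_eq_norm, ← zpow_natCast, _root_.inv_zpow', norm_le_pow_iff_mem_span_pow,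
    ← ker_toZModPow, RingHom.mem_ker, map_sub, sub_eq_zero]
  rfl

theorem matrix_map_toZModPow_eq_one_iff {n : ℕ} {X : Matrix (Fin r) (Fin r) ℤ_[p]} :
    X.map (toZModPow n) = 1 ↔ ∃ A, X = 1 + (p : ℤ_[p]) ^ n • A := by
  rw [← Matrix.map_one (toZModPow n) (map_zero _) (map_one _),
    map_eq_map_iff_exists_eq_add_smul (ker_toZModPow n)]

theorem antitone_setOf_matrix_map_toZModPow_eq_one :
    Antitone fun n => {X : Matrix (Fin r) (Fin r) ℤ_[p] | X.map (toZModPow n) = 1} := by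
  intro m n hmn X
  simp only [Set.mem_ofPred_eq, matrix_map_toZModPow_eq_one_iff]
  rintro ⟨A, hA⟩
  exact ⟨(p : ℤ_[p]) ^ (n - m) • A, by rw [hA, smul_smul, ← pow_add, Nat.add_sub_cancel' hmn]⟩

theorem matrix_map_toZMod_eq_iff {A B : Matrix (Fin r) (Fin r) ℤ_[p]} :
    A.map toZMod = B.map toZMod ↔ ∃ C, A = B + (p : ℤ_[p]) • C :=
  Matrix.map_eq_map_iff_exists_eq_add_smul (ker_toZMod.trans maximalIdeal_eq_span_p)

theorem matrix_map_toZMod_add_pow_smul {k : ℕ} (hk : k ≠ 0)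
    (A B : Matrix (Fin r) (Fin r) ℤ_[p]) :
    (A + (p : ℤ_[p]) ^ k • B).map toZMod = A.map toZMod :=
  matrix_map_toZMod_eq_iff.2 ⟨(p : ℤ_[p]) ^ (k - 1) • B, by
    rw [smul_smul, ← pow_succ', Nat.sub_add_cancel (Nat.one_le_iff_ne_zero.2 hk)]⟩

end PadicInt

section CongruenceSubgroup

variable {l : ℕ} [Fact l.Prime] {r : ℕ} {P : Subgroup (GL (Fin r) ℤ_[l])}

theorem mem_ker_glRed_iff_map {n : ℕ} {x : GL (Fin r) ℤ_[l]} :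
    x ∈ (glRed l r n).ker ↔
      (x : Matrix (Fin r) (Fin r) ℤ_[l]).map (PadicInt.toZModPow n) = 1 :=
  Units.ext_iff

theorem mem_ker_glRed_iff {n : ℕ} {x : GL (Fin r) ℤ_[l]} :
    x ∈ (glRed l r n).ker ↔
      ∃ A, (x : Matrix (Fin r) (Fin r) ℤ_[l]) = 1 + (l : ℤ_[l]) ^ n • A :=
  mem_ker_glRed_iff_map.trans PadicInt.matrix_map_toZModPow_eq_one_iff

theorem ker_glRed_antitone : Antitone fun n => (glRed l r n).ker := fun _ _ hmn _ hx =>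
  mem_ker_glRed_iff_map.2 <|
    PadicInt.antitone_setOf_matrix_map_toZModPow_eq_one hmn (mem_ker_glRed_iff_map.1 hx)

theorem nhds_one_hasBasis_ker_glRed :
    (𝓝 (1 : GL (Fin r) ℤ_[l])).HasBasis (fun _ => True)
      fun m => ((glRed l r m).ker : Set (GL (Fin r) ℤ_[l])) := by
  have hB := PadicInt.nhds_one_matrix_hasBasis (p := l) (r := r)
  have hop := hB.comap MulOpposite.unop
  rw [MulOpposite.comap_unop_nhds] at hop
  have hanti := PadicInt.antitone_setOf_matrix_map_toZModPow_eq_one (p := l) (r := r)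
  have hprod := hB.prod_same_index hop fun {i j} _ _ =>
    ⟨max i j, trivial, hanti (le_max_left i j), Set.preimage_mono (hanti (le_max_right i j))⟩
  rw [Units.isInducing_embedProduct.nhds_eq_comap, map_one, Prod.one_eq_mk, nhds_prod_eq]
  refine (hprod.comap _).congr (fun _ => Iff.rfl) fun m _ => ?_
  ext x
  change (x : Matrix (Fin r) (Fin r) ℤ_[l]).map _ = 1 ∧
    (↑x⁻¹ : Matrix (Fin r) (Fin r) ℤ_[l]).map _ = 1 ↔ _
  rw [← mem_ker_glRed_iff_map, ← mem_ker_glRed_iff_map, inv_mem_iff, and_self, SetLike.mem_coe]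

theorem mem_levelSubgroup_iff {n : ℕ} {x : P} :
    x ∈ levelSubgroup l r P n ↔
      ∃ A, ((x : GL (Fin r) ℤ_[l]) : Matrix (Fin r) (Fin r) ℤ_[l]) = 1 + (l : ℤ_[l]) ^ n • A :=
  mem_ker_glRed_iff

theorem levelSubgroup_antitone : Antitone (levelSubgroup l r P) :=
  fun _ _ hmn _ hx => ker_glRed_antitone hmn hx

instance (n : ℕ) : (levelSubgroup l r P n).Normal :=
  MonoidHom.normal_ker _

instance (n : ℕ) : (levelSubgroup l r P n).FiniteIndex :=
  Subgroup.finiteIndex_ker _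

theorem nhds_one_hasBasis_levelSubgroup :
    (𝓝 (1 : P)).HasBasis (fun _ => True) fun m => (levelSubgroup l r P m : Set P) := by
  rw [nhds_subtype]
  exact nhds_one_hasBasis_ker_glRed.comap _

theorem isOpen_levelSubgroup (n : ℕ) : IsOpen (levelSubgroup l r P n : Set P) :=
  Subgroup.isOpen_of_mem_nhds _ (nhds_one_hasBasis_levelSubgroup.mem_of_mem trivial)

theorem exists_val_pow_prime_eq {n : ℕ} (hn : 1 ≤ n) {x : GL (Fin r) ℤ_[l]}
    {A : Matrix (Fin r) (Fin r) ℤ_[l]}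
    (hx : (x : Matrix (Fin r) (Fin r) ℤ_[l]) = 1 + (l : ℤ_[l]) ^ n • A) :
    ∃ B, ((x ^ l : GL (Fin r) ℤ_[l]) : Matrix (Fin r) (Fin r) ℤ_[l]) =
      1 + (l : ℤ_[l]) ^ (n + 1) • (A + (l : ℤ_[l]) ^ (n - 1) • B) := by
  obtain ⟨B, hB⟩ := Matrix.exists_one_add_smul_pow_eq ((l : ℤ_[l]) ^ n) A l
  refine ⟨B, ?_⟩
  rw [Units.val_pow_eq_pow_val, hx, hB, smul_add, smul_smul, ← pow_add, ← pow_mul, ← pow_succ',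
    add_assoc, show n + 1 + (n - 1) = n * 2 by omega]

theorem pow_mem_levelSubgroup_succ {n : ℕ} (hn : 1 ≤ n) {x : P}
    (hx : x ∈ levelSubgroup l r P n) : x ^ l ∈ levelSubgroup l r P (n + 1) := by
  obtain ⟨A, hA⟩ := mem_levelSubgroup_iff.1 hx
  obtain ⟨B, hB⟩ := exists_val_pow_prime_eq hn hA
  exact mem_levelSubgroup_iff.2 ⟨_, hB⟩

theorem pow_prime_pow_mem_levelSubgroup {n : ℕ} (hn : 1 ≤ n) {x : P}
    (hx : x ∈ levelSubgroup l r P n) (k : ℕ) : x ^ l ^ k ∈ levelSubgroup l r P (n + k) := by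
  induction k with
  | zero => simpa using hx
  | succ k ih =>
    rw [pow_succ, pow_mul]
    exact pow_mem_levelSubgroup_succ (by omega : 1 ≤ n + k) ih

theorem commutator_mem_levelSubgroup {n : ℕ} {x y : P} (hx : x ∈ levelSubgroup l r P n)
    (hy : y ∈ levelSubgroup l r P n) : ⁅x, y⁆ ∈ levelSubgroup l r P (2 * n) := by
  obtain ⟨A, hA⟩ := mem_levelSubgroup_iff.1 hx
  obtain ⟨B, hB⟩ := mem_levelSubgroup_iff.1 hy
  obtain ⟨C, hC⟩ := Matrix.GeneralLinearGroup.exists_val_commutator_eq hA hB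
  exact mem_levelSubgroup_iff.2 ⟨C, by rw [mul_comm, pow_mul]; exact hC⟩

theorem isPGroup_quotient_levelSubgroup {n : ℕ} (hn : 1 ≤ n) (m : ℕ) :
    IsPGroup l
      (levelSubgroup l r P n ⧸ (levelSubgroup l r P m).subgroupOf (levelSubgroup l r P n)) := by
  refine fun q => QuotientGroup.induction_on q fun x => ⟨m, ?_⟩
  rw [← QuotientGroup.mk_pow, QuotientGroup.eq_one_iff, Subgroup.mem_subgroupOf]
  exact levelSubgroup_antitone (by omega) (pow_prime_pow_mem_levelSubgroup hn x.2 m)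

variable (l r P) in
/-- The image of `Π(n)` in `Γ(n) / Γ(n + 1) ≅ M_r(𝔽_ℓ)`, where `Γ(n) = ker (glRed l r n)`. -/
def leadingTerms (n : ℕ) : Set (Matrix (Fin r) (Fin r) (ZMod l)) :=
  {α | ∃ x : P, ∃ A, ((x : GL (Fin r) ℤ_[l]) : Matrix (Fin r) (Fin r) ℤ_[l]) =
    1 + (l : ℤ_[l]) ^ n • A ∧ A.map PadicInt.toZMod = α}

theorem leadingTerms_subset_succ {n : ℕ} (hn : 2 ≤ n) :
    leadingTerms l r P n ⊆ leadingTerms l r P (n + 1) := by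
  rintro _ ⟨x, A, hA, rfl⟩
  obtain ⟨B, hB⟩ := exists_val_pow_prime_eq (by omega) hA
  exact ⟨x ^ l, _, hB, PadicInt.matrix_map_toZMod_add_pow_smul (by omega) A B⟩

theorem exists_leadingTerms_eventually_const :
    ∃ N, 2 ≤ N ∧ ∀ n, N ≤ n → leadingTerms l r P n = leadingTerms l r P N := by
  have hmono : Monotone fun k => leadingTerms l r P (k + 2) :=
    monotone_nat_of_le_succ fun k => leadingTerms_subset_succ (by omega)
  obtain ⟨k, hk⟩ := wellFoundedGT_iff_monotone_chain_condition.1 inferInstance ⟨_, hmono⟩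
  refine ⟨k + 2, by omega, fun n hn => ?_⟩
  obtain ⟨j, rfl⟩ : ∃ j, n = j + 2 := ⟨n - 2, by omega⟩
  exact (hk j (by omega)).symm

theorem exists_pow_inv_mul_mem_levelSubgroup {N : ℕ} (hN : 2 ≤ N)
    (hstab : ∀ n, N ≤ n → leadingTerms l r P n = leadingTerms l r P N) {n : ℕ} (hn : N ≤ n)
    {x : P} (hx : x ∈ levelSubgroup l r P (n + 1)) :
    ∃ y ∈ levelSubgroup l r P n, (y ^ l)⁻¹ * x ∈ levelSubgroup l r P (n + 2) := by
  obtain ⟨A, hA⟩ := mem_levelSubgroup_iff.1 hx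
  have hlead : A.map PadicInt.toZMod ∈ leadingTerms l r P n := by
    rw [hstab n hn, ← hstab (n + 1) (by omega)]
    exact ⟨x, A, hA, rfl⟩
  obtain ⟨y, B, hB, hBA⟩ := hlead
  obtain ⟨C, hC⟩ := exists_val_pow_prime_eq (by omega) hB
  obtain ⟨D, hD⟩ := PadicInt.matrix_map_toZMod_eq_iff.1 <|
    hBA.symm.trans (PadicInt.matrix_map_toZMod_add_pow_smul (k := n - 1) (by omega) B C).symm
  have hyx := Matrix.GeneralLinearGroup.val_inv_mul_eq_one_add_smul hA hC hD
  rw [← pow_succ] at hyx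
  exact ⟨y, mem_levelSubgroup_iff.2 ⟨B, hB⟩, mem_levelSubgroup_iff.2 ⟨_, hyx⟩⟩

theorem frattiniOf_levelSubgroup_le {n : ℕ} (hn : 1 ≤ n) :
    frattiniOf (levelSubgroup l r P n) ≤ levelSubgroup l r P (n + 1) := by
  have hΦ := frattiniOpen_le_of_pow_mem (p := l) (K := (levelSubgroup l r P (n + 1)).subgroupOf _)
    ((isOpen_levelSubgroup (n + 1)).preimage continuous_subtype_val)
    (fun x => pow_mem_levelSubgroup_succ hn x.2)
    (Subgroup.commutator_le.2 fun x _ y _ =>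
      levelSubgroup_antitone (by omega) (commutator_mem_levelSubgroup x.2 y.2))
  rintro _ ⟨ξ, hξ, rfl⟩
  exact hΦ hξ

theorem levelSubgroup_succ_le_of_pow_mem {N : ℕ} (hN : 2 ≤ N)
    (hstab : ∀ n, N ≤ n → leadingTerms l r P n = leadingTerms l r P N) {n : ℕ} (hn : N ≤ n)
    {S : Subgroup P} (hpow : ∀ y ∈ levelSubgroup l r P n, y ^ l ∈ S) {m : ℕ}
    (hm : levelSubgroup l r P m ≤ S) : levelSubgroup l r P (n + 1) ≤ S := by
  suffices ∀ t k, n + 1 ≤ k → m ≤ k + t → levelSubgroup l r P k ≤ S from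
    this m _ le_rfl (by omega)
  intro t
  induction t with
  | zero => exact fun k _ hmk => (levelSubgroup_antitone hmk).trans hm
  | succ t ih =>
    intro k hk hmk x hx
    obtain ⟨j, rfl⟩ : ∃ j, k = j + 1 := ⟨k - 1, by omega⟩
    obtain ⟨y, hy, hyx⟩ := exists_pow_inv_mul_mem_levelSubgroup hN hstab (by omega) hx
    simpa using S.mul_mem (hpow y (levelSubgroup_antitone (by omega) hy))
      (ih (j + 2) (by omega) (by omega) hyx)

theorem levelSubgroup_succ_le_frattiniOf {N : ℕ} (hN : 2 ≤ N)
    (hstab : ∀ n, N ≤ n → leadingTerms l r P n = leadingTerms l r P N) {n : ℕ} (hn : N ≤ n) :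
    levelSubgroup l r P (n + 1) ≤ frattiniOf (levelSubgroup l r P n) := by
  intro x hx
  refine ⟨⟨x, levelSubgroup_antitone n.le_succ hx⟩, Subgroup.mem_sInf.2 fun M hM => ?_, rfl⟩
  set S := M.map (levelSubgroup l r P n).subtype
  have hSopen : IsOpen (S : Set P) := by
    rw [Subgroup.coe_map]
    exact (isOpen_levelSubgroup n).isOpenMap_subtype_val _ hM.1
  obtain ⟨m, -, hm⟩ := nhds_one_hasBasis_levelSubgroup.mem_iff.1 (hSopen.mem_nhds S.one_mem)
  have hKM : (levelSubgroup l r P (max m n)).subgroupOf (levelSubgroup l r P n) ≤ M :=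
    fun y hy => by
      obtain ⟨z, hz, hzy⟩ := hm (levelSubgroup_antitone (le_max_left m n) hy)
      exact (Subtype.ext hzy : z = y) ▸ hz
  have hpow := pow_mem_of_isCoatom (isPGroup_quotient_levelSubgroup (by omega) _) hKM
    ((isMaximalOpenSubgroup_iff hM.1).1 hM)
  obtain ⟨z, hz, hzx⟩ := levelSubgroup_succ_le_of_pow_mem hN hstab hn (S := S)
    (fun y hy => ⟨⟨y, hy⟩ ^ l, hpow _, rfl⟩) (fun y hy => hm hy) hx
  exact (Subtype.ext hzx : z = ⟨x, _⟩) ▸ hz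

end CongruenceSubgroup

theorem Cn_eventually_eq_general (l : ℕ) [Fact (Nat.Prime l)] (r : ℕ)
    (P : Subgroup (GL (Fin r) ℤ_[l])) :
    ∃ N : ℕ, 1 ≤ N ∧ ∀ n : ℕ, N ≤ n →
      Cn l r P n = {U : Subgroup ↥P | IsOpen (U : Set ↥P) ∧ levelSubgroup l r P n ≤ U ∧
        ¬ levelSubgroup l r P (n - 1) ≤ U} := by
  obtain ⟨N, hN, hstab⟩ := exists_leadingTerms_eventually_const (l := l) (r := r) (P := P)
  refine ⟨N + 1, by omega, fun n hn => ?_⟩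
  obtain ⟨k, rfl⟩ : ∃ k, n = k + 1 := ⟨n - 1, by omega⟩
  have hΦ : frattiniOf (levelSubgroup l r P k) = levelSubgroup l r P (k + 1) :=
    le_antisymm (frattiniOf_levelSubgroup_le (by omega))
      (levelSubgroup_succ_le_frattiniOf hN hstab (by omega))
  simp only [Cn, Nat.add_sub_cancel, hΦ]

/-- For `n` large enough (depending only on `Π`), `𝒞_n(Π)` coincides with the set of open
subgroups `U ⊆ Π` such that `Π(n) ⊆ U` but `Π(n-1) ⊄ U`. -/
theorem Cn_eventually_eq (l : ℕ) [Fact (Nat.Prime l)] (r : ℕ)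
    (P : Subgroup (GL (Fin r) ℤ_[l])) (hP : IsClosed (P : Set (GL (Fin r) ℤ_[l]))) :
    ∃ N : ℕ, 1 ≤ N ∧ ∀ n : ℕ, N ≤ n →
      Cn l r P n = {U : Subgroup ↥P | IsOpen (U : Set ↥P) ∧ levelSubgroup l r P n ≤ U ∧
        ¬ levelSubgroup l r P (n - 1) ≤ U} :=
  Cn_eventually_eq_general l r P
end

section
/- Let k be an algebraically closed field of characteristic p > 0 and let ℓ be a prime with ℓ ≠ p. Let H be a finite subgroup of PGL₂(k) whose order is a power of ℓ. Then H is cyclic, or ℓ = 2 and H is isomorphic to a dihedral group of order a power of 2. -/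
open Matrix

abbrev PGL2 (k : Type*) [Field k] : Type _ :=
  GL (Fin 2) k ⧸ Subgroup.center (GL (Fin 2) k)

/-!
Take an element of order `ℓ` in the center of `H` and lift it to a matrix `B`. Then `B ^ ℓ` is
scalar, and `X ^ ℓ - c` is separable because `ℓ ≠ char k`, so `B` is diagonalizable: after
conjugation the central element is the class of `diag(t, 1)` with `t ≠ 1`. Its centralizer in
`PGL₂(k)` consists of the diagonal classes, a copy of `kˣ`, and, only when `t = -1` (which forces
`ℓ = 2`), the antidiagonal classes, each of which is an involution inverting the diagonal ones.
Hence `H` is a finite subgroup of `kˣ`, so cyclic, or has a cyclic subgroup of index two inverted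
by an involution, so is dihedral.
-/

open Module Polynomial in
theorem Matrix.exists_conj_eq_diagonal_of_squarefree {n K : Type*} [Fintype n] [DecidableEq n]
    [Field K] [IsAlgClosed K] {p : K[X]} (hp : Squarefree p) {A : Matrix n n K}
    (hA : aeval A p = 0) :
    ∃ (P : GL n K) (d : n → K), ((P⁻¹ : GL n K) : Matrix n n K) * A * P = diagonal d := by
  classical
  set f : End K (n → K) := toLin' A
  have hf : f.IsSemisimple := by
    refine End.isSemisimple_of_squarefree_aeval_eq_zero hp ?_
    rw [show f = toLinAlgEquiv' A from rfl, aeval_algEquiv, AlgHom.comp_apply, hA, map_zero]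
  have hdecomp := DirectSum.isInternal_submodule_of_iSupIndep_of_iSup_eq_top
    f.eigenspaces_iSupIndep hf.iSup_eigenspace_eq_top
  let bμ := fun μ => finBasis K (f.eigenspace μ)
  let b := hdecomp.collectedBasis bμ
  let e := Pi.basisFun K n
  let σ := (b.indexEquiv e).symm
  let v := b.reindex σ.symm
  have hv (i : n) : f (v i) = (σ i).1 • v i := by
    have := End.mem_eigenspace_iff.mp (hdecomp.collectedBasis_mem bμ (σ i))
    simpa [v, b, hdecomp.collectedBasis_coe] using this
  refine ⟨⟨e.toMatrix v, v.toMatrix e, e.toMatrix_mul_toMatrix_flip v,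
    v.toMatrix_mul_toMatrix_flip e⟩, fun i => (σ i).1, ?_⟩
  have key : v.toMatrix e * A * e.toMatrix v = LinearMap.toMatrix v v f := by
    have := basis_toMatrix_mul_linearMap_toMatrix_mul_basis_toMatrix v e v e f
    rwa [LinearMap.toMatrix_eq_toMatrix', LinearMap.toMatrix'_toLin'] at this
  refine key.trans ?_
  ext i j
  rw [LinearMap.toMatrix_apply, hv, map_smul, v.repr_self, diagonal_apply, Finsupp.smul_apply,
    Finsupp.single_apply]
  split_ifs <;> simp_all

theorem IsPGroup.exists_mem_center_orderOf_eq {p : ℕ} [Fact p.Prime] {G : Type*} [Group G]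
    [Finite G] [Nontrivial G] (hG : IsPGroup p G) : ∃ z ∈ Subgroup.center G, orderOf z = p := by
  have := hG.center_nontrivial
  obtain ⟨m, hm, hcard⟩ := (hG.to_subgroup _).nontrivial_iff_card.mp this
  obtain ⟨z, hz⟩ := exists_prime_orderOf_dvd_card' p (hcard ▸ dvd_pow_self p hm.ne')
  exact ⟨z, z.2, by rw [Subgroup.orderOf_coe, hz]⟩

theorem isCyclic_of_range_le_range_units {R G M : Type*} [CommRing R] [IsDomain R] [Group G]
    [Finite G] [Group M] {φ : Rˣ →* M} (hφ : Function.Injective φ) {f : G →* M}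
    (hf : Function.Injective f) (h : f.range ≤ φ.range) : IsCyclic G := by
  let ψ : G →* Rˣ :=
    (MonoidHom.ofInjective hφ).symm.toMonoidHom.comp ((Subgroup.inclusion h).comp f.rangeRestrict)
  have hψ : Function.Injective ψ :=
    (MonoidHom.ofInjective hφ).symm.injective.comp
      ((Subgroup.inclusion_injective h).comp (MonoidHom.rangeRestrict_injective_iff.mpr hf))
  exact isCyclic_of_injective_ringHom ((Units.coeHom R).comp ψ) (Units.val_injective.comp hψ)

namespace DihedralGroup

variable {n : ℕ} {G : Type*} [Group G]

def lift (e : Multiplicative (ZMod n) →* G) (s : G) (hs : s * s = 1)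
    (hinv : ∀ i, s * e i * s = (e i)⁻¹) : DihedralGroup n →* G where
  toFun
    | r i => e (.ofAdd i)
    | sr i => s * e (.ofAdd i)
  map_one' := map_one e
  map_mul' := by
    have hcomm (i : Multiplicative (ZMod n)) : e i * s = s * (e i)⁻¹ := by
      rw [← hinv, ← mul_assoc, ← mul_assoc, hs, one_mul]
    rintro (i | i) (j | j) <;>
      simp only [r_mul_r, r_mul_sr, sr_mul_r, sr_mul_sr, sub_eq_neg_add, ofAdd_add, ofAdd_neg,
        map_mul, map_inv, ← mul_assoc, hcomm, hinv]

end DihedralGroup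

theorem nonempty_mulEquiv_dihedralGroup_of_index_eq_two {G : Type*} [Group G] [Finite G]
    (K : Subgroup G) [hK : IsCyclic K] (hindex : K.index = 2) {s : G} (hs : s ∉ K)
    (hs2 : s * s = 1) (hinv : ∀ x ∈ K, s * x * s = x⁻¹) :
    Nonempty (G ≃* DihedralGroup (Nat.card K)) := by
  let ε := zmodCyclicMulEquiv hK
  let e : Multiplicative (ZMod (Nat.card K)) →* G := K.subtype.comp ε.toMonoidHom
  have he : Function.Injective e := Subtype.val_injective.comp ε.injective
  let f := DihedralGroup.lift e s hs2 fun i => hinv _ (ε i).2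
  have hf : Function.Injective f := by
    refine (injective_iff_map_eq_one f).mpr ?_
    rintro (i | i) h
    · have : Multiplicative.ofAdd i = 1 := he (h.trans (map_one e).symm)
      rw [DihedralGroup.one_def, ← ofAdd_eq_one.mp this]
    · exact absurd (eq_inv_of_mul_eq_one_left h ▸ inv_mem (ε _).2) hs
  have hcard : Nat.card G ≤ Nat.card (DihedralGroup (Nat.card K)) := by
    rw [DihedralGroup.nat_card, ← K.card_mul_index, hindex, mul_comm]
  exact ⟨(MulEquiv.ofBijective f (hf.bijective_of_nat_card_le hcard)).symm⟩

namespace PGL2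

variable {k : Type*} [Field k]

def mk : GL (Fin 2) k →* PGL2 k := QuotientGroup.mk' _

theorem mk_surjective : Function.Surjective (mk : GL (Fin 2) k → PGL2 k) :=
  QuotientGroup.mk'_surjective _

theorem mk_eq_mk_iff {g h : GL (Fin 2) k} :
    mk g = mk h ↔ ∃ u : kˣ, g * GeneralLinearGroup.scalar (Fin 2) u = h := by
  rw [mk, QuotientGroup.mk'_eq_mk', GeneralLinearGroup.center_eq_range_scalar]
  simp

def diagGL : kˣ →* GL (Fin 2) k where
  toFun t := ⟨diagonal ![(t : k), 1], diagonal ![(t⁻¹ : kˣ), 1],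
    by ext i j; fin_cases i <;> fin_cases j <;> simp,
    by ext i j; fin_cases i <;> fin_cases j <;> simp⟩
  map_one' := by ext i j; fin_cases i <;> fin_cases j <;> simp
  map_mul' s t := by ext i j; fin_cases i <;> fin_cases j <;> simp

def swapGL : GL (Fin 2) k :=
  ⟨!![0, 1; 1, 0], !![0, 1; 1, 0], by simp [one_fin_two], by simp [one_fin_two]⟩

def diag : kˣ →* PGL2 k := mk.comp diagGL

def swap : PGL2 k := mk swapGL

theorem diag_injective : Function.Injective (diag : kˣ →* PGL2 k) := by
  refine (injective_iff_map_eq_one _).mpr fun t ht => ?_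
  obtain ⟨u, hu⟩ := mk_eq_mk_iff.mp ht
  have h := (GeneralLinearGroup.ext_iff _ _).mp hu
  have h00 := h 0 0
  have h11 := h 1 1
  simp [diagGL] at h00 h11
  simpa [h11] using h00

theorem mk_mem_range_diag {M : GL (Fin 2) k} (h01 : M 0 1 = 0) (h10 : M 1 0 = 0) :
    mk M ∈ (diag : kˣ →* PGL2 k).range := by
  have hdet := M.det.ne_zero
  rw [GeneralLinearGroup.val_det_apply, det_fin_two, h01, h10, mul_zero, sub_zero] at hdet
  refine ⟨Units.mk0 _ (left_ne_zero_of_mul hdet) / Units.mk0 _ (right_ne_zero_of_mul hdet), ?_⟩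
  refine mk_eq_mk_iff.mpr ⟨Units.mk0 _ (right_ne_zero_of_mul hdet), ?_⟩
  ext i j
  fin_cases i <;> fin_cases j <;> simp [diagGL, h01, h10, right_ne_zero_of_mul hdet]

theorem swap_mul_swap : (swap : PGL2 k) * swap = 1 := by
  rw [swap, ← map_mul, ← map_one mk]
  congr 1
  ext i j
  fin_cases i <;> fin_cases j <;> simp [swapGL]

theorem swap_mul_diag (t : kˣ) : swap * diag t = diag t⁻¹ * swap := by
  refine (mk_eq_mk_iff.mpr ⟨t, ?_⟩).symm
  ext i j
  fin_cases i <;> fin_cases j <;> simp [diagGL, swapGL]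

theorem swap_mul_diag_mul_swap_mul_diag (u v : kˣ) :
    swap * diag u * (swap * diag v) = diag (u⁻¹ * v) := by
  rw [swap_mul_diag, mul_assoc, ← mul_assoc swap, swap_mul_swap, one_mul, map_mul]

theorem diagonal_or_antidiagonal_of_conj_diagGL {t u : kˣ} (ht : t ≠ 1) {M : GL (Fin 2) k}
    (hM : M * diagGL t * GeneralLinearGroup.scalar (Fin 2) u = diagGL t * M) :
    (M 0 1 = 0 ∧ M 1 0 = 0) ∨ (M 0 0 = 0 ∧ M 1 1 = 0 ∧ t = -1) := by
  have h := (GeneralLinearGroup.ext_iff _ _).mp hM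
  have h00 := h 0 0
  have h01 := h 0 1
  have h10 := h 1 0
  have h11 := h 1 1
  simp [diagGL, Matrix.mul_apply, Fin.sum_univ_two] at h00 h01 h10 h11
  have ht' : (t : k) ≠ 1 := fun h => ht (Units.val_eq_one.mp h)
  by_cases hu : (u : k) = 1
  · rw [hu, mul_one] at h01 h10
    left
    constructor
    · have : ((t : k) - 1) * M 0 1 = 0 := by linear_combination -h01
      exact (mul_eq_zero.mp this).resolve_left (sub_ne_zero.mpr ht')
    · have : ((t : k) - 1) * M 1 0 = 0 := by linear_combination h10
      exact (mul_eq_zero.mp this).resolve_left (sub_ne_zero.mpr ht')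
  right
  have hu' : (u : k) - 1 ≠ 0 := sub_ne_zero.mpr hu
  have hM00 : M 0 0 = 0 := by
    have : ((t : k) * ((u : k) - 1)) * M 0 0 = 0 := by linear_combination h00
    exact (mul_eq_zero.mp this).resolve_left (mul_ne_zero t.ne_zero hu')
  have hM11 : M 1 1 = 0 := by
    have : ((u : k) - 1) * M 1 1 = 0 := by linear_combination h11
    exact (mul_eq_zero.mp this).resolve_left hu'
  have hdet := M.det.ne_zero
  rw [GeneralLinearGroup.val_det_apply, det_fin_two, hM00, hM11] at hdet
  obtain ⟨hM01, hM10⟩ : M 0 1 ≠ 0 ∧ M 1 0 ≠ 0 := by simpa using hdet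
  have hut : (u : k) = t := by
    have : ((u : k) - t) * M 0 1 = 0 := by linear_combination h01
    exact sub_eq_zero.mp ((mul_eq_zero.mp this).resolve_right hM01)
  have htt : ((t : k) - 1) * ((t : k) + 1) = 0 := by
    have : ((t : k) * u - 1) * M 1 0 = 0 := by linear_combination h10
    linear_combination (mul_eq_zero.mp this).resolve_right hM10 - (t : k) * hut
  refine ⟨hM00, hM11, Units.ext ?_⟩
  simpa [add_eq_zero_iff_eq_neg] using (mul_eq_zero.mp htt).resolve_left (sub_ne_zero.mpr ht')

theorem mem_range_diag_or_of_commute {t : kˣ} (ht : t ≠ 1) {x : PGL2 k}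
    (hx : Commute x (diag t)) :
    x ∈ (diag : kˣ →* PGL2 k).range ∨ (t = -1 ∧ ∃ u, swap * diag u = x) := by
  obtain ⟨M, rfl⟩ := mk_surjective x
  have hcomm : mk (M * diagGL t) = mk (diagGL t * M) := by
    rw [map_mul, map_mul]
    exact hx.eq
  obtain ⟨u, hu⟩ := mk_eq_mk_iff.mp hcomm
  rcases diagonal_or_antidiagonal_of_conj_diagGL ht hu with ⟨h01, h10⟩ | ⟨h00, h11, rfl⟩
  · exact Or.inl (mk_mem_range_diag h01 h10)
  obtain ⟨v, hv⟩ := mk_mem_range_diag (M := swapGL * M)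
    (by simp [swapGL, Matrix.mul_apply, h11]) (by simp [swapGL, Matrix.mul_apply, h00])
  refine Or.inr ⟨rfl, v, ?_⟩
  rw [hv, map_mul, ← mul_assoc, ← swap, swap_mul_swap, one_mul]

open Polynomial in
theorem exists_conj_eq_diag [IsAlgClosed k] {n : ℕ} (hn : (n : k) ≠ 0) {x : PGL2 k}
    (hx : x ^ n = 1) : ∃ (g : PGL2 k) (t : kˣ), g * x * g⁻¹ = diag t := by
  obtain ⟨B, rfl⟩ := mk_surjective x
  obtain ⟨c, hc⟩ := mk_eq_mk_iff.mp (show mk 1 = mk (B ^ n) by rw [map_pow, hx, map_one])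
  have hB : aeval (B : Matrix (Fin 2) (Fin 2) k) (X ^ n - C (c : k)) = 0 := by
    rw [map_sub, map_pow, aeval_X, aeval_C, ← Units.val_pow_eq_pow_val, ← hc, one_mul,
      sub_eq_zero]
    rfl
  obtain ⟨P, d, hP⟩ := exists_conj_eq_diagonal_of_squarefree
    (separable_X_pow_sub_C (c : k) hn c.ne_zero).squarefree hB
  obtain ⟨t, ht⟩ := mk_mem_range_diag (M := P⁻¹ * B * P)
    (by rw [Units.val_mul, Units.val_mul, hP, diagonal_apply_ne _ zero_ne_one])
    (by rw [Units.val_mul, Units.val_mul, hP, diagonal_apply_ne _ one_ne_zero])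
  exact ⟨mk P⁻¹, t, by rw [ht, map_inv, inv_inv, ← map_inv, ← map_mul, ← map_mul]⟩

theorem isCyclic_or_dihedral_of_commute_diag (H : Subgroup (PGL2 k)) [Finite H] {t : kˣ}
    (ht : t ≠ 1) (hH : ∀ x ∈ H, Commute x (diag t)) :
    IsCyclic H ∨ (t = -1 ∧ ∃ n, Nonempty (H ≃* DihedralGroup n)) := by
  by_cases hHT : H ≤ diag.range
  · exact Or.inl (isCyclic_of_range_le_range_units diag_injective H.subtype_injective
      (by rwa [Subgroup.range_subtype]))
  obtain ⟨s, hsH, hsT⟩ := SetLike.not_le_iff_exists.mp hHT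
  obtain ⟨rfl, u, rfl⟩ := (mem_range_diag_or_of_commute ht (hH _ hsH)).resolve_left hsT
  let K := diag.range.subgroupOf H
  have : IsCyclic K := isCyclic_of_range_le_range_units diag_injective
    (f := H.subtype.comp K.subtype) (H.subtype_injective.comp K.subtype_injective)
    (by rintro _ ⟨x, rfl⟩; exact Subgroup.mem_subgroupOf.mp x.2)
  have hindex : K.index = 2 := by
    refine Subgroup.index_eq_two_iff_exists_notMem_and'.mpr ⟨⟨_, hsH⟩, hsT, fun y => ?_⟩
    rcases mem_range_diag_or_of_commute ht (hH y y.2) with hy | ⟨-, v, hv⟩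
    · exact Or.inr hy
    · exact Or.inl ⟨u⁻¹ * v, by simp [← hv, swap_mul_diag_mul_swap_mul_diag]⟩
  refine Or.inr ⟨rfl, _, nonempty_mulEquiv_dihedralGroup_of_index_eq_two K hindex
    (s := ⟨_, hsH⟩) hsT ?_ ?_⟩
  · ext
    simp [swap_mul_diag_mul_swap_mul_diag]
  · rintro x ⟨v, hv⟩
    ext
    change swap * diag u * H.subtype x * (swap * diag u) = (H.subtype x)⁻¹
    rw [← hv, mul_assoc swap, ← map_mul, swap_mul_diag_mul_swap_mul_diag, _root_.mul_inv_rev,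
      inv_mul_cancel_right, map_inv]

theorem isCyclic_or_dihedral_of_commute [IsAlgClosed k] (H : Subgroup (PGL2 k)) [Finite H]
    {z : PGL2 k} {n : ℕ} (hn : (n : k) ≠ 0) (hn1 : n ≠ 1) (hz : orderOf z = n)
    (hH : ∀ x ∈ H, Commute x z) :
    IsCyclic H ∨ (n = 2 ∧ ∃ d, Nonempty (H ≃* DihedralGroup d)) := by
  obtain ⟨g, t, hgz⟩ := exists_conj_eq_diag hn (hz ▸ pow_orderOf_eq_one z)
  let c := MulAut.conj g
  have hcz : c z = diag t := hgz
  have ht : orderOf t = n := by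
    rw [← hz, ← orderOf_injective diag diag_injective, ← hcz, MulEquiv.orderOf_eq]
  have ht1 : t ≠ 1 := by
    rintro rfl
    exact hn1 (ht ▸ orderOf_one)
  let e := c.subgroupMap H
  have : Finite (H.map c.toMonoidHom) := Finite.of_equiv _ e.toEquiv
  have hH' : ∀ x ∈ H.map c.toMonoidHom, Commute x (diag t) := by
    rintro _ ⟨y, hy, rfl⟩
    rw [← hcz]
    exact (hH y hy).map c
  rcases isCyclic_or_dihedral_of_commute_diag _ ht1 hH' with h | ⟨rfl, d, ⟨φ⟩⟩
  · exact Or.inl (e.isCyclic.mpr h)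
  · exact Or.inr ⟨ht ▸ orderOf_eq_prime (by simp) ht1, d, ⟨e.trans φ⟩⟩

end PGL2

theorem pgl2_l_subgroup_cyclic_or_dihedral_general (k : Type*) [Field k] [IsAlgClosed k]
    (p : ℕ) [CharP k p] (l : ℕ) (hl : l.Prime) (hlp : l ≠ p)
    (H : Subgroup (PGL2 k)) (hcard : ∃ m : ℕ, Nat.card H = l ^ m) :
    IsCyclic H ∨ (l = 2 ∧ ∃ m : ℕ, Nonempty (H ≃* DihedralGroup (2 ^ m))) := by
  obtain ⟨m, hm⟩ := hcard
  have : Finite H := Nat.finite_of_card_ne_zero (by simp [hm, hl.ne_zero])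
  have : Fact l.Prime := ⟨hl⟩
  rcases subsingleton_or_nontrivial H with _ | _
  · exact Or.inl isCyclic_of_subsingleton
  obtain ⟨z, hz, hzl⟩ := (IsPGroup.of_card hm).exists_mem_center_orderOf_eq
  have hcomm (x : PGL2 k) (hx : x ∈ H) : Commute x z :=
    congrArg Subtype.val (Subgroup.mem_center_iff.mp hz ⟨x, hx⟩)
  rcases PGL2.isCyclic_or_dihedral_of_commute H (CharP.cast_ne_zero_of_ne_of_prime k hl hlp.symm)
    hl.ne_one (by rwa [Subgroup.orderOf_coe]) hcomm with h | ⟨rfl, d, ⟨φ⟩⟩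
  · exact Or.inl h
  have hd : 2 * d = 2 ^ m := by rw [← DihedralGroup.nat_card, ← Nat.card_congr φ.toEquiv, hm]
  obtain ⟨j, -, rfl⟩ := (Nat.dvd_prime_pow Nat.prime_two).mp (Dvd.intro_left 2 hd)
  exact Or.inr ⟨rfl, j, ⟨φ⟩⟩

/-- Let `k` be an algebraically closed field of characteristic `p > 0` and `ℓ ≠ p` a prime.
A finite subgroup of `PGL₂(k)` of `ℓ`-power order is cyclic, or `ℓ = 2` and it is dihedral
of `2`-power order. -/
theorem pgl2_l_subgroup_cyclic_or_dihedral (k : Type*) [Field k] [IsAlgClosed k]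
    (p : ℕ) (hp : p.Prime) [CharP k p] (l : ℕ) (hl : l.Prime) (hlp : l ≠ p)
    (H : Subgroup (PGL2 k)) (hfin : Finite H) (hcard : ∃ m : ℕ, Nat.card H = l ^ m) :
    IsCyclic H ∨ (l = 2 ∧ ∃ m : ℕ, Nonempty (H ≃* DihedralGroup (2 ^ m))) :=
  pgl2_l_subgroup_cyclic_or_dihedral_general k p l hl hlp H hcard
end

section
/- Let G be a profinite group and (N_n)_{n ≥ 1} a decreasing sequence of open normal subgroups with ⋂_n N_n = {1}. Suppose that for each n the quotient G/N_n is isomorphic, as a group, to a dihedral group of order 2^{m_n + 1}, where m_n → +∞. Then G contains an open abelian subgroup which is topologically isomorphic to the additive group ℤ₂ of 2-adic integers. -/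
/-!
For `m ≥ 2`, a surjection `D_{2^a} → D_{2^m}` pulls the rotations back to the rotations, so the
preimage `U` of the rotations under `G → G ⧸ N n` is the same open subgroup for all large `n`,
and `U ⧸ N n` is cyclic of order `2 ^ m n`. By compactness some `x₀ ∈ U` generates every
`U ⧸ N n`; measuring elements of `U` against `x₀` gives compatible maps `U → ℤ ⧸ 2 ^ m n`,
hence a continuous injective homomorphism `U → ℤ₂` whose image is compact and dense.
-/

open Filter Multiplicative

namespace DihedralGroup

variable {n a b : ℕ}

def rotationHom (n : ℕ) : Multiplicative (ZMod n) →* DihedralGroup n where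
  toFun i := r i.toAdd
  map_one' := rfl
  map_mul' _ _ := (r_mul_r _ _).symm

lemma rotationHom_injective : Function.Injective (rotationHom n) :=
  fun _ _ h => r.inj h

def rotations (n : ℕ) : Subgroup (DihedralGroup n) := (rotationHom n).range

lemma r_mem_rotations (i : ZMod n) : r i ∈ rotations n := ⟨.ofAdd i, rfl⟩

lemma sr_notMem_rotations (i : ZMod n) : sr i ∉ rotations n := by
  rintro ⟨_, h⟩
  cases h

lemma eq_top_of_rotations_le {K : Subgroup (DihedralGroup n)} (hK : rotations n ≤ K) {i : ZMod n}
    (hi : sr i ∈ K) : K = ⊤ := by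
  refine eq_top_iff.mpr fun x _ => ?_
  rcases x with j | j
  · exact hK (r_mem_rotations j)
  · simpa only [sr_mul_r, add_sub_cancel] using K.mul_mem hi (hK (r_mem_rotations (j - i)))

lemma r_eq_r_one_zpow (i : ZMod n) : r i = r 1 ^ (ZMod.cast i : ℤ) := by
  rw [r_one_zpow, ZMod.intCast_zmod_cast]

/-- Otherwise every element of the image of `ψ` would square to `1`, while `r 1` has order `b`. -/
lemma map_r_one_mem_rotations {ψ : DihedralGroup a →* DihedralGroup b}
    (hψ : Function.Surjective ψ) (hb : 2 < b) : ψ (r 1) ∈ rotations b := by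
  rcases hψ1 : ψ (r 1) with j | j
  · exact r_mem_rotations j
  have hsq : ∀ x, ψ x ^ 2 = 1 := by
    rintro (i | i)
    · rw [r_eq_r_one_zpow, map_zpow, hψ1, ← zpow_natCast, ← zpow_mul, mul_comm, zpow_mul,
        zpow_natCast, sq, sr_mul_self, one_zpow]
    · rw [← map_pow, sq, sr_mul_self, map_one]
  obtain ⟨x, hx⟩ := hψ (r 1)
  have hdvd : b ∣ 2 := orderOf_r_one (n := b) ▸ orderOf_dvd_of_pow_eq_one (hx ▸ hsq x)
  exact absurd (Nat.le_of_dvd two_pos hdvd) hb.not_ge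

lemma rotations_le_comap {ψ : DihedralGroup a →* DihedralGroup b}
    (hψ : Function.Surjective ψ) (hb : 2 < b) : rotations a ≤ (rotations b).comap ψ := by
  rintro _ ⟨i, rfl⟩
  show ψ (r i.toAdd) ∈ rotations b
  rw [r_eq_r_one_zpow, map_zpow]
  exact zpow_mem (map_r_one_mem_rotations hψ hb) _

lemma comap_rotations_of_surjective {ψ : DihedralGroup a →* DihedralGroup b}
    (hψ : Function.Surjective ψ) (hb : 2 < b) : (rotations b).comap ψ = rotations a := by
  refine le_antisymm (fun x hx => ?_) (rotations_le_comap hψ hb)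
  rcases x with i | i
  · exact r_mem_rotations i
  have htop := eq_top_of_rotations_le (rotations_le_comap hψ hb) hx
  obtain ⟨y, hy⟩ := hψ (sr 0)
  have hy' : ψ y ∈ rotations b := (htop ▸ Subgroup.mem_top y : y ∈ (rotations b).comap ψ)
  exact absurd (hy ▸ hy') (sr_notMem_rotations 0)

lemma comap_rotations_eq_of_ker_le {G : Type*} [Group G] {φ : G →* DihedralGroup a}
    {φ' : G →* DihedralGroup b} (hφ : Function.Surjective φ) (hφ' : Function.Surjective φ')
    (hker : φ.ker ≤ φ'.ker) (hb : 2 < b) :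
    (rotations b).comap φ' = (rotations a).comap φ := by
  set ψ := φ.liftOfSurjective hφ ⟨φ', hker⟩
  have hψ : ψ.comp φ = φ' := φ.liftOfRightInverse_comp _ _ ⟨φ', hker⟩
  rw [← hψ, ← Subgroup.comap_comap,
    comap_rotations_of_surjective (Function.Surjective.of_comp (hψ ▸ hφ')) hb]

variable {G : Type*} [Group G]

noncomputable def rotationAngle (f : G →* DihedralGroup n) (hf : ∀ x, f x ∈ rotations n) :
    G →* Multiplicative (ZMod n) :=
  (MonoidHom.ofInjective rotationHom_injective).symm.toMonoidHom.comp (f.codRestrict _ hf)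

lemma r_rotationAngle (f : G →* DihedralGroup n) (hf : ∀ x, f x ∈ rotations n) (x : G) :
    r (rotationAngle f hf x).toAdd = f x :=
  MonoidHom.apply_ofInjective_symm rotationHom_injective ⟨f x, hf x⟩

lemma rotationAngle_eq_one_iff (f : G →* DihedralGroup n) (hf : ∀ x, f x ∈ rotations n)
    (x : G) : rotationAngle f hf x = 1 ↔ f x = 1 := by
  rw [← r_rotationAngle f hf x, one_def]
  exact ⟨fun h => by rw [h]; rfl, fun h => r.inj h⟩

lemma rotationAngle_surjective (f : G →* DihedralGroup n) (hf : ∀ x, f x ∈ rotations n)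
    (hsurj : ∀ i, ∃ x, f x = r i) : Function.Surjective (rotationAngle f hf) := by
  intro i
  obtain ⟨x, hx⟩ := hsurj i.toAdd
  exact ⟨x, r.inj ((r_rotationAngle f hf x).trans hx)⟩

lemma exists_surjective_ker_eq_of_comap_rotations_eq {U : Subgroup G} {φ : G →* DihedralGroup n}
    (hφ : Function.Surjective φ) (hU : (rotations n).comap φ = U) :
    ∃ χ : U →* Multiplicative (ZMod n),
      Function.Surjective χ ∧ χ.ker = φ.ker.comap U.subtype := by
  have hf : ∀ x : U, φ.comp U.subtype x ∈ rotations n := fun x => hU.ge x.2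
  refine ⟨rotationAngle _ hf, rotationAngle_surjective _ hf fun i => ?_, ?_⟩
  · obtain ⟨g, hg⟩ := hφ (r i)
    have hgU : g ∈ (rotations n).comap φ := by
      rw [Subgroup.mem_comap, hg]
      exact r_mem_rotations i
    exact ⟨⟨g, hU ▸ hgU⟩, hg⟩
  · ext x
    rw [MonoidHom.mem_ker, Subgroup.mem_comap, MonoidHom.mem_ker]
    exact rotationAngle_eq_one_iff _ _ x

end DihedralGroup

lemma ZMod.cast_cast_of_dvd {a b c : ℕ} (hab : a ∣ b) (hbc : b ∣ c) (x : ZMod c) :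
    (ZMod.cast (ZMod.cast x : ZMod b) : ZMod a) = ZMod.cast x :=
  RingHom.congr_fun (ZMod.castHom_comp hab hbc) x

namespace PadicInt

variable {p : ℕ} [Fact p.Prime] {m : ℕ → ℕ}

lemma dist_le_of_toZModPow_eq {k : ℕ} {x y : ℤ_[p]} (h : toZModPow k x = toZModPow k y) :
    dist x y ≤ (p : ℝ) ^ (-(k : ℤ)) := by
  rw [dist_eq_norm, norm_le_pow_iff_mem_span_pow, ← ker_toZModPow, RingHom.mem_ker, map_sub, h,
    sub_self]

lemma exists_dist_lt_of_toZModPow_eq (hm : Tendsto m atTop atTop) {ε : ℝ} (hε : 0 < ε) :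
    ∃ n, ∀ x y : ℤ_[p], toZModPow (m n) x = toZModPow (m n) y → dist x y < ε := by
  obtain ⟨k, hk⟩ := exists_pow_neg_lt p hε
  obtain ⟨n, hn⟩ := (hm.eventually_ge_atTop k).exists
  refine ⟨n, fun x y h => (dist_le_of_toZModPow_eq ?_).trans_lt hk⟩
  rw [← cast_toZModPow k _ hn x, h, cast_toZModPow k _ hn y]

lemma ext_of_toZModPow_of_tendsto (hm : Tendsto m atTop atTop) {x y : ℤ_[p]}
    (h : ∀ n, toZModPow (m n) x = toZModPow (m n) y) : x = y :=
  eq_of_forall_dist_le fun _ hε =>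
    (exists_dist_lt_of_toZModPow_eq hm hε).elim fun n hn => (hn x y (h n)).le

lemma exists_toZModPow_eq (hm : Tendsto m atTop atTop) (hmono : Monotone m)
    (a : ∀ n, ZMod (p ^ m n)) (ha : ∀ n n', n ≤ n' → ZMod.cast (a n') = a n) :
    ∃ y : ℤ_[p], ∀ n, toZModPow (m n) y = a n := by
  choose s hs using fun k => (hm.eventually_ge_atTop k).exists
  -- `c k` is the residue modulo `p ^ k` that the `a n` with `k ≤ m n` all agree on
  let c (k : ℕ) : ZMod (p ^ k) := ZMod.cast (a (s k))
  have hc : ∀ k n, k ≤ m n → ZMod.cast (a n) = c k := by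
    intro k n hk
    rcases le_total n (s k) with h | h
    · rw [← ha n (s k) h, ZMod.cast_cast_of_dvd (pow_dvd_pow p hk) (pow_dvd_pow p (hmono h))]
    · show _ = ZMod.cast (a (s k))
      rw [← ha (s k) n h, ZMod.cast_cast_of_dvd (pow_dvd_pow p (hs k)) (pow_dvd_pow p (hmono h))]
  let f (k : ℕ) : ℤ := (c k).val
  have hf : ∀ k, (f k : ZMod (p ^ k)) = c k := fun k => by
    rw [Int.cast_natCast, ZMod.natCast_zmod_val]
  have hdvd : ∀ k, (p : ℤ) ^ k ∣ f (k + 1) - f k := by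
    intro k
    have hk : (f (k + 1) : ZMod (p ^ k)) = f k := by
      rw [← ZMod.cast_intCast (pow_dvd_pow p k.le_succ), hf, hf,
        ZMod.cast_cast_of_dvd (pow_dvd_pow p k.le_succ) (pow_dvd_pow p (hs (k + 1))),
        hc k _ (k.le_succ.trans (hs (k + 1)))]
    exact_mod_cast (ZMod.intCast_eq_intCast_iff_dvd_sub _ _ _).mp hk.symm
  refine ⟨ofIntSeq _ (isCauSeq_padicNorm_of_pow_dvd_sub f p hdvd), fun n => ?_⟩
  rw [toZModPow_ofIntSeq_of_pow_dvd_sub f p hdvd, hf, ← hc _ n le_rfl, ZMod.cast_id]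

lemma continuous_of_continuous_toZModPow_comp {X : Type*} [TopologicalSpace X]
    (hm : Tendsto m atTop atTop) {f : X → ℤ_[p]}
    (hf : ∀ n, Continuous fun x => toZModPow (m n) (f x)) : Continuous f := by
  refine continuous_iff_continuousAt.mpr fun x => Metric.tendsto_nhds.mpr fun ε hε => ?_
  obtain ⟨n, hn⟩ := exists_dist_lt_of_toZModPow_eq (p := p) hm hε
  filter_upwards [(hf n).continuousAt.preimage_mem_nhds ((isOpen_discrete _).mem_nhds rfl)]
    with y hy using hn _ _ (Eq.symm hy)

lemma denseRange_of_surjective_toZModPow_comp {X : Type*} (hm : Tendsto m atTop atTop)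
    {f : X → ℤ_[p]} (hf : ∀ n, Function.Surjective fun x => toZModPow (m n) (f x)) :
    DenseRange f := by
  refine Metric.denseRange_iff.mpr fun y ε hε => ?_
  obtain ⟨n, hn⟩ := exists_dist_lt_of_toZModPow_eq (p := p) hm hε
  obtain ⟨x, hx⟩ := hf n (toZModPow (m n) y)
  exact ⟨x, hn _ _ hx.symm⟩

end PadicInt

namespace MonoidHom

variable {H : Type*} [Group H] {a b : ℕ}

lemma map_eq_map_of_ker_le {A B : Type*} [Group A] [Group B] {f : H →* A} {g : H →* B}
    (hker : f.ker ≤ g.ker) {x y : H} (h : f x = f y) : g x = g y :=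
  g.eq_iff.mpr (hker (f.eq_iff.mp h))

lemma map_pow_eq_ofAdd {χ : H →* Multiplicative (ZMod a)} {x : H} (hx : χ x = ofAdd 1)
    (k : ℕ) : χ (x ^ k) = ofAdd (k : ZMod a) := by
  rw [map_pow, hx, ← ofAdd_nsmul, nsmul_one]

lemma dvd_of_ker_le {χ : H →* Multiplicative (ZMod a)} {χ' : H →* Multiplicative (ZMod b)}
    (hker : χ.ker ≤ χ'.ker) {x : H} (hx' : χ' x = ofAdd 1) : b ∣ a := by
  have hχ : χ (x ^ a) = χ 1 := by
    rw [map_pow, map_one, ← toAdd_eq_zero, toAdd_pow, nsmul_eq_mul, ZMod.natCast_self, zero_mul]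
  have hχ' := map_eq_map_of_ker_le hker hχ
  rwa [map_pow_eq_ofAdd hx', map_one, ← ofAdd_zero, ofAdd.injective.eq_iff,
    ZMod.natCast_eq_zero_iff] at hχ'

lemma toAdd_map_eq_cast_of_ker_le [NeZero a] {χ : H →* Multiplicative (ZMod a)}
    {χ' : H →* Multiplicative (ZMod b)} (hker : χ.ker ≤ χ'.ker) {x : H} (hx : χ x = ofAdd 1)
    (hx' : χ' x = ofAdd 1) (y : H) : (χ' y).toAdd = ZMod.cast (χ y).toAdd := by
  have hy : χ y = χ (x ^ (χ y).toAdd.val) := by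
    rw [map_pow_eq_ofAdd hx, ZMod.natCast_zmod_val, ofAdd_toAdd]
  rw [map_eq_map_of_ker_le hker hy, map_pow_eq_ofAdd hx', toAdd_ofAdd, ZMod.cast_eq_val]

lemma isUnit_of_ker_le [NeZero a] {χ : H →* Multiplicative (ZMod a)}
    {χ' : H →* Multiplicative (ZMod b)} (hker : χ.ker ≤ χ'.ker)
    (hχ' : Function.Surjective χ') {x : H} (hx : IsUnit (χ x).toAdd) : IsUnit (χ' x).toAdd := by
  obtain ⟨y, hy⟩ := hχ' (ofAdd 1)
  obtain ⟨c, hc⟩ : ∃ c : ZMod a, c * (χ x).toAdd = (χ y).toAdd :=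
    ⟨(χ y).toAdd * ↑hx.unit⁻¹, by rw [mul_assoc, hx.val_inv_mul, mul_one]⟩
  have hyx : χ y = χ (x ^ c.val) := by
    apply toAdd.injective
    rw [map_pow, toAdd_pow, nsmul_eq_mul, ZMod.natCast_zmod_val, hc]
  have h1 : (c.val : ZMod b) * (χ' x).toAdd = 1 := by
    rw [← nsmul_eq_mul, ← toAdd_pow, ← map_pow, ← map_eq_map_of_ker_le hker hyx, hy,
      toAdd_ofAdd]
  exact IsUnit.of_mul_eq_one_right _ h1

end MonoidHom

section

variable {H : Type*} [Group H] [TopologicalSpace H]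

lemma MonoidHom.continuous_of_isOpen_ker [IsTopologicalGroup H] {A : Type*} [Group A]
    [TopologicalSpace A] [DiscreteTopology A] (f : H →* A) (hf : IsOpen (f.ker : Set H)) :
    Continuous f :=
  continuous_of_continuousAt_one f <| by
    rw [ContinuousAt, nhds_discrete A, map_one, tendsto_pure]
    exact hf.mem_nhds (one_mem f.ker)

lemma exists_forall_isUnit_toAdd [CompactSpace H] {k : ℕ → ℕ} [∀ n, NeZero (k n)]
    (χ : ∀ n, H →* Multiplicative (ZMod (k n))) (hcont : ∀ n, Continuous (χ n))
    (hsurj : ∀ n, Function.Surjective (χ n)) (hker : Antitone fun n => (χ n).ker) :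
    ∃ x, ∀ n, IsUnit (χ n x).toAdd := by
  obtain ⟨x, hx⟩ := IsCompact.nonempty_iInter_of_sequence_nonempty_isCompact_isClosed
    (fun n => χ n ⁻¹' {u | IsUnit u.toAdd})
    (fun n _ hx => MonoidHom.isUnit_of_ker_le (hker n.le_succ) (hsurj n) hx)
    (fun n => (hsurj n (ofAdd 1)).imp fun x hx => by simp [hx])
    (isClosed_discrete _ |>.preimage (hcont 0)).isCompact
    (fun n => isClosed_discrete _ |>.preimage (hcont n))
  exact ⟨x, Set.mem_iInter.mp hx⟩

lemma MonoidHom.exists_ker_eq_and_map_eq_ofAdd_one {k : ℕ} (χ : H →* Multiplicative (ZMod k))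
    (hχ : Continuous χ) {x : H} (hx : IsUnit (χ x).toAdd) :
    ∃ χ' : H →* Multiplicative (ZMod k),
      Continuous χ' ∧ χ'.ker = χ.ker ∧ χ' x = ofAdd 1 := by
  refine ⟨(AddMonoidHom.mulLeft (↑hx.unit⁻¹ : ZMod k)).toMultiplicative.comp χ,
    (continuous_of_discreteTopology (f := (AddMonoidHom.mulLeft _).toMultiplicative)).comp hχ,
    ?_, ?_⟩
  · ext y
    simp [MonoidHom.mem_ker, ← toAdd_eq_zero, Units.mul_right_eq_zero]
  · exact toAdd.injective hx.val_inv_mul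

lemma exists_continuous_mulEquiv_of_bijective [CompactSpace H] {K : Type*} [Group K]
    [TopologicalSpace K] [T2Space K] (f : H →* K) (hf : Continuous f)
    (hbij : Function.Bijective f) :
    ∃ e : H ≃* K, Continuous e ∧ Continuous e.symm :=
  ⟨.ofBijective f hbij, hf,
    (hf.homeoOfEquivCompactToT2 (f := (MulEquiv.ofBijective f hbij).toEquiv)).symm.continuous⟩

variable [CompactSpace H] {p : ℕ} [Fact p.Prime] {m : ℕ → ℕ}

theorem exists_continuous_mulEquiv_padicInt_of_generator (hm : Tendsto m atTop atTop)
    (χ : ∀ n, H →* Multiplicative (ZMod (p ^ m n))) (hcont : ∀ n, Continuous (χ n))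
    (hker : Antitone fun n => (χ n).ker) (hinf : ⨅ n, (χ n).ker = ⊥) {x₀ : H}
    (hx₀ : ∀ n, χ n x₀ = ofAdd 1) :
    ∃ e : H ≃* Multiplicative ℤ_[p], Continuous e ∧ Continuous e.symm := by
  have hmono : Monotone m := fun n n' h =>
    (Nat.pow_dvd_pow_iff_le_right (Fact.out : p.Prime).one_lt).mp
      (MonoidHom.dvd_of_ker_le (hker h) (hx₀ n))
  choose Θ hΘ using fun y => PadicInt.exists_toZModPow_eq hm hmono (fun n => (χ n y).toAdd)
    fun n n' h => (MonoidHom.toAdd_map_eq_cast_of_ker_le (hker h) (hx₀ n') (hx₀ n) y).symm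
  let Θhom : H →* Multiplicative ℤ_[p] := MonoidHom.mk' (ofAdd ∘ Θ) fun x y =>
    congrArg ofAdd <| PadicInt.ext_of_toZModPow_of_tendsto hm fun n => by simp [hΘ]
  have hΘcont : Continuous Θ := PadicInt.continuous_of_continuous_toZModPow_comp hm fun n => by
    simp only [hΘ]
    exact continuous_toAdd.comp (hcont n)
  have hΘsurj : Function.Surjective Θ := by
    have hdense := PadicInt.denseRange_of_surjective_toZModPow_comp hm (f := Θ) fun n v =>
      ⟨x₀ ^ v.val, by simp [hΘ, MonoidHom.map_pow_eq_ofAdd (hx₀ n)]⟩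
    exact Set.range_eq_univ.mp
      ((isCompact_range hΘcont).isClosed.closure_eq ▸ hdense.closure_range)
  have hinj : Function.Injective Θhom := by
    refine (injective_iff_map_eq_one Θhom).mpr fun y hy => ?_
    have hy0 : Θ y = 0 := congrArg toAdd hy
    have hy' : ∀ n, y ∈ (χ n).ker := fun n =>
      toAdd.injective (by rw [← hΘ, hy0, map_zero, toAdd_one])
    simpa [hinf] using Subgroup.mem_iInf.mpr hy'
  exact exists_continuous_mulEquiv_of_bijective Θhom (continuous_ofAdd.comp hΘcont)
    ⟨hinj, fun z => (hΘsurj z.toAdd).imp fun _ h => congrArg ofAdd h⟩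

theorem exists_continuous_mulEquiv_padicInt (hm : Tendsto m atTop atTop)
    (χ : ∀ n, H →* Multiplicative (ZMod (p ^ m n))) (hcont : ∀ n, Continuous (χ n))
    (hsurj : ∀ n, Function.Surjective (χ n)) (hker : Antitone fun n => (χ n).ker)
    (hinf : ⨅ n, (χ n).ker = ⊥) :
    ∃ e : H ≃* Multiplicative ℤ_[p], Continuous e ∧ Continuous e.symm := by
  obtain ⟨x₀, hx₀⟩ := exists_forall_isUnit_toAdd χ hcont hsurj hker
  choose χ' hcont' hker' hχ' using fun n =>
    MonoidHom.exists_ker_eq_and_map_eq_ofAdd_one (χ n) (hcont n) (hx₀ n)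
  simp only [← hker'] at hker hinf
  exact exists_continuous_mulEquiv_padicInt_of_generator hm χ' hcont' hker hinf hχ'

end

open DihedralGroup in
theorem open_Z2_subgroup_of_dihedral_quotients_general (G : Type*) [Group G] [TopologicalSpace G]
    [IsTopologicalGroup G] [CompactSpace G]
    (N : ℕ → Subgroup G) (hopen : ∀ n, IsOpen (N n : Set G))
    (hanti : ∀ n, N (n + 1) ≤ N n)
    (hinter : (⨅ n : ℕ, N n) = ⊥) (m : ℕ → ℕ)
    (hdihedral : ∀ n, ∃ φ : G →* DihedralGroup (2 ^ m n),
      Function.Surjective φ ∧ φ.ker = N n)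
    (hm : Tendsto m atTop atTop) :
    ∃ U : Subgroup G, IsOpen (U : Set G) ∧ (∀ x y : U, x * y = y * x) ∧
      ∃ e : U ≃* Multiplicative ℤ_[2], Continuous e ∧ Continuous e.symm := by
  choose φ hφ hker using hdihedral
  have hN : Antitone N := antitone_nat_of_succ_le hanti
  obtain ⟨n₀, hn₀⟩ := (hm.eventually_ge_atTop 2).exists
  set U := (rotations _).comap (φ n₀)
  have hU : ∀ n, (rotations _).comap (φ (n + n₀)) = U := fun n =>
    (comap_rotations_eq_of_ker_le (hφ _) (hφ n₀)
      (by simpa only [hker] using hN (n₀.le_add_left n))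
      ((Nat.lt_pow_self one_lt_two).trans_le (Nat.pow_le_pow_right two_pos hn₀))).symm
  have hUopen : IsOpen (U : Set G) :=
    Subgroup.isOpen_mono (hker n₀ ▸ Subgroup.ker_le_comap (φ n₀) _) (hopen n₀)
  have : CompactSpace U := isCompact_iff_compactSpace.mp (U.isClosed_of_isOpen hUopen).isCompact
  choose χ hχ hkerχ using fun n =>
    exists_surjective_ker_eq_of_comap_rotations_eq (hφ (n + n₀)) (hU n)
  simp only [hker] at hkerχ
  obtain ⟨e, he, he'⟩ :=
    exists_continuous_mulEquiv_padicInt (hm.comp (tendsto_add_atTop_nat n₀)) χ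
      (fun n => (χ n).continuous_of_isOpen_ker <| by
        rw [hkerχ, Subgroup.coe_comap]
        exact (hopen _).preimage continuous_subtype_val)
      hχ (fun n n' h => by
        simpa only [hkerχ] using Subgroup.comap_mono (hN (Nat.add_le_add_right h n₀)))
      (by simp only [hkerχ, ← Subgroup.comap_iInf, hN.iInf_nat_add, hinter, MonoidHom.comap_bot,
        Subgroup.ker_subtype])
  exact ⟨U, hUopen, fun x y => e.injective (by rw [map_mul, map_mul, mul_comm]), e, he, he'⟩

/-- Let `G` be a profinite group and `(N n)` a decreasing sequence of open normal subgroups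
with trivial intersection such that `G ⧸ N n` is dihedral of order `2 ^ (m n + 1)` (encoded
by a surjection `G →* DihedralGroup (2 ^ m n)` with kernel `N n`) where `m n → ∞`. Then `G`
has an open abelian subgroup topologically isomorphic to the additive group `ℤ₂` of
`2`-adic integers. -/
theorem open_Z2_subgroup_of_dihedral_quotients (G : Type*) [Group G] [TopologicalSpace G]
    [IsTopologicalGroup G] [CompactSpace G] [T2Space G] [TotallyDisconnectedSpace G]
    (N : ℕ → Subgroup G) (hopen : ∀ n, IsOpen (N n : Set G))
    (hnormal : ∀ n, (N n).Normal) (hanti : ∀ n, N (n + 1) ≤ N n)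
    (hinter : (⨅ n : ℕ, N n) = ⊥) (m : ℕ → ℕ)
    (hdihedral : ∀ n, ∃ φ : G →* DihedralGroup (2 ^ m n),
      Function.Surjective φ ∧ φ.ker = N n)
    (hm : Tendsto m atTop atTop) :
    ∃ U : Subgroup G, IsOpen (U : Set G) ∧ (∀ x y : U, x * y = y * x) ∧
      ∃ e : U ≃* Multiplicative ℤ_[2], Continuous e ∧ Continuous e.symm :=
  open_Z2_subgroup_of_dihedral_quotients_general G N hopen hanti hinter m hdihedral hm
end
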